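/- Suppose $\tilde A$ is dense in $A^*$. Then every $\tilde w \in \tilde A$ lies in the linear span of $\{ \tilde w' * \tilde w : \tilde w' \in \tilde A \}$ and in the linear span of $\{ \tilde w * \tilde w' : \tilde w' \in \tilde A \}$. -/

import Mathlib

open TensorProduct

noncomputable section

variable {K : Type} [Field K] {A : Type} [CommRing A] [HopfAlgebra K A]

/-- Convolution product on the dual of a coalgebra:
`(w * w') a = ∑ w a₍₁₎ * w' a₍₂₎`. -/
def conv (w w' : Module.Dual K A) : Module.Dual K A :=
  (LinearMap.mul' K K).comp ((TensorProduct.map w w').comp (Coalgebra.comul (R := K)))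

/-- Left convolution by `u`, as a linear endomorphism of the dual. -/
def convL (u : Module.Dual K A) : Module.Dual K A →ₗ[K] Module.Dual K A where
  toFun := conv u
  map_add' x y := by
    unfold conv
    rw [TensorProduct.map_add_right, LinearMap.add_comp, LinearMap.comp_add]
  map_smul' c x := by
    show (LinearMap.mul' K K).comp ((TensorProduct.map u (c • x)).comp (Coalgebra.comul (R := K))) =
      c • (LinearMap.mul' K K).comp ((TensorProduct.map u x).comp (Coalgebra.comul (R := K)))
    rw [TensorProduct.map_smul_right, LinearMap.smul_comp, LinearMap.comp_smul]

/-- The span of `{u * w' : w' ∈ A*}`. -/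
def rightOrbit (u : Module.Dual K A) : Submodule K (Module.Dual K A) :=
  Submodule.span K {x | ∃ w', x = conv u w'}

lemma rightOrbit_mapsTo (u : Module.Dual K A) :
    ∀ x ∈ rightOrbit u, convL u x ∈ rightOrbit u := by
  intro x hx
  have h : Submodule.map (convL u) (rightOrbit u) ≤ rightOrbit u := by
    rw [rightOrbit, Submodule.map_span]
    apply Submodule.span_mono
    rintro y ⟨x, ⟨w', rfl⟩, rfl⟩
    exact ⟨conv u w', rfl⟩
  exact h ⟨x, hx, rfl⟩

/-- The trace of the finite-rank operator "left convolution by `u`", computed as the trace of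
its restriction to the finite-dimensional invariant subspace `u * A*` containing its image. -/
def convTrace (u : Module.Dual K A) : K :=
  LinearMap.trace K (rightOrbit u) ((convL u).restrict (rightOrbit_mapsTo u))

/-- The span of `{w₁ * w * w₂ : w₁, w₂ ∈ A*}`. -/
def twoSidedOrbit (w : Module.Dual K A) : Submodule K (Module.Dual K A) :=
  Submodule.span K {x | ∃ w₁ w₂, x = conv w₁ (conv w w₂)}

/-- `Ã = {w ∈ A* : dim_K (A* * w * A*) < ∞}`. -/
def tildeSet (K : Type) [Field K] (A : Type) [CommRing A] [HopfAlgebra K A] :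
    Set (Module.Dual K A) :=
  {w | FiniteDimensional K (twoSidedOrbit w)}

/-- A normalized invariant integral on `G = Spec A`:  `w_G(1) = 1` and
`w * w_G = w(1) w_G = w_G * w` for all `w ∈ A*`. -/
def IsNormalizedIntegral (wG : Module.Dual K A) : Prop :=
  wG 1 = 1 ∧ ∀ w : Module.Dual K A, conv w wG = w 1 • wG ∧ conv wG w = w 1 • wG
/-- `Ã` is dense in `A*` (for the weak linear topology): the only `a ∈ A` annihilated by all
of `Ã` is `0`. -/
def TildeDense (K : Type) [Field K] (A : Type) [CommRing A] [HopfAlgebra K A] : Prop :=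
  ∀ a : A, (∀ u ∈ tildeSet K A, u a = 0) → a = 0

/-! For `u ∈ Ã` both spans lie in the finite-dimensional space `A* * u * A*`, and a
finite-dimensional subspace of `A*` is weakly closed: it contains every functional vanishing on
its common kernel. If every `v * u` with `v ∈ Ã` vanishes at `a`, then `u ⇀ a = ∑ a₍₁₎ u a₍₂₎` is
annihilated by `Ã`, hence is `0` by density, and `u a = ε (u ⇀ a) = 0`; symmetrically on the
other side with `a ↼ u`. -/

section Hit

variable {R C : Type*} [CommSemiring R] [AddCommMonoid C] [Module R C] [Coalgebra R C]

/-- The left hit action `f ⇀ c = ∑ c₍₁₎ f c₍₂₎`. -/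
def leftHit (f : Module.Dual R C) : C →ₗ[R] C :=
  (TensorProduct.rid R C).toLinearMap ∘ₗ f.lTensor C ∘ₗ Coalgebra.comul

/-- The right hit action `c ↼ f = ∑ f c₍₁₎ c₍₂₎`. -/
def rightHit (f : Module.Dual R C) : C →ₗ[R] C :=
  (TensorProduct.lid R C).toLinearMap ∘ₗ f.rTensor C ∘ₗ Coalgebra.comul

theorem counit_leftHit (f : Module.Dual R C) (c : C) :
    Coalgebra.counit (leftHit f c) = f c := by
  have h : Coalgebra.counit ∘ₗ (TensorProduct.rid R C).toLinearMap ∘ₗ f.lTensor C =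
      f ∘ₗ (TensorProduct.lid R C).toLinearMap ∘ₗ Coalgebra.counit.rTensor C := by
    ext x y
    simp [mul_comm]
  simpa [leftHit, Coalgebra.rTensor_counit_comul] using congr($h (Coalgebra.comul c))

theorem counit_rightHit (f : Module.Dual R C) (c : C) :
    Coalgebra.counit (rightHit f c) = f c := by
  have h : Coalgebra.counit ∘ₗ (TensorProduct.lid R C).toLinearMap ∘ₗ f.rTensor C =
      f ∘ₗ (TensorProduct.rid R C).toLinearMap ∘ₗ Coalgebra.counit.lTensor C := by
    ext x y
    simp [mul_comm]
  simpa [rightHit, Coalgebra.lTensor_counit_comul] using congr($h (Coalgebra.comul c))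

end Hit

theorem Subspace.mem_of_forall_dualCoannihilator {K V : Type*} [Field K] [AddCommGroup V]
    [Module K V] {W : Subspace K (Module.Dual K V)} [FiniteDimensional K W] {f : Module.Dual K V}
    (h : ∀ v, (∀ g ∈ W, g v = 0) → f v = 0) : f ∈ W := by
  rw [← Subspace.dualCoannihilator_dualAnnihilator_eq (W := W), Submodule.mem_dualAnnihilator]
  exact fun v hv ↦ h v ((Submodule.mem_dualCoannihilator v).1 hv)

theorem conv_apply_eq_leftHit (v u : Module.Dual K A) (a : A) : conv v u a = v (leftHit u a) := by
  have h : LinearMap.mul' K K ∘ₗ TensorProduct.map v u =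
      v ∘ₗ (TensorProduct.rid K A).toLinearMap ∘ₗ u.lTensor A := by
    ext x y
    simp [mul_comm]
  exact congr($h (Coalgebra.comul a))

theorem conv_apply_eq_rightHit (u v : Module.Dual K A) (a : A) : conv u v a = v (rightHit u a) := by
  have h : LinearMap.mul' K K ∘ₗ TensorProduct.map u v =
      v ∘ₗ (TensorProduct.lid K A).toLinearMap ∘ₗ u.rTensor A := by
    ext x y
    simp
  exact congr($h (Coalgebra.comul a))

theorem counit_conv (u : Module.Dual K A) : conv Coalgebra.counit u = u :=
  LinearMap.ext fun a ↦ (conv_apply_eq_leftHit _ u a).trans (counit_leftHit u a)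

theorem conv_counit (u : Module.Dual K A) : conv u Coalgebra.counit = u :=
  LinearMap.ext fun a ↦ (conv_apply_eq_rightHit u _ a).trans (counit_rightHit u a)

theorem span_conv_left_le_twoSidedOrbit (S : Set (Module.Dual K A)) (u : Module.Dual K A) :
    Submodule.span K {x | ∃ v ∈ S, x = conv v u} ≤ twoSidedOrbit u :=
  Submodule.span_le.2 fun _ ⟨v, _, hx⟩ ↦
    Submodule.subset_span ⟨v, Coalgebra.counit, by rw [hx, conv_counit]⟩

theorem span_conv_right_le_twoSidedOrbit (S : Set (Module.Dual K A)) (u : Module.Dual K A) :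
    Submodule.span K {x | ∃ v ∈ S, x = conv u v} ≤ twoSidedOrbit u :=
  Submodule.span_le.2 fun _ ⟨v, _, hx⟩ ↦
    Submodule.subset_span ⟨Coalgebra.counit, v, by rw [hx, counit_conv]⟩

theorem TildeDense.eq_zero_of_forall_conv_left (hdense : TildeDense K A) {u : Module.Dual K A}
    {a : A} (h : ∀ v ∈ tildeSet K A, conv v u a = 0) : u a = 0 := by
  have hit : leftHit u a = 0 :=
    hdense _ fun v hv ↦ (conv_apply_eq_leftHit v u a).symm.trans (h v hv)
  rw [← counit_leftHit, hit, map_zero]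

theorem TildeDense.eq_zero_of_forall_conv_right (hdense : TildeDense K A) {u : Module.Dual K A}
    {a : A} (h : ∀ v ∈ tildeSet K A, conv u v a = 0) : u a = 0 := by
  have hit : rightHit u a = 0 :=
    hdense _ fun v hv ↦ (conv_apply_eq_rightHit u v a).symm.trans (h v hv)
  rw [← counit_rightHit, hit, map_zero]

theorem mem_span_tilde_conv_of_dense (hdense : TildeDense K A) :
    ∀ u ∈ tildeSet K A,
      u ∈ Submodule.span K {x : Module.Dual K A | ∃ v ∈ tildeSet K A, x = conv v u} ∧
      u ∈ Submodule.span K {x : Module.Dual K A | ∃ v ∈ tildeSet K A, x = conv u v} := by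
  intro u (hu : FiniteDimensional K (twoSidedOrbit u))
  have := Submodule.finiteDimensional_of_le (span_conv_left_le_twoSidedOrbit (tildeSet K A) u)
  have := Submodule.finiteDimensional_of_le (span_conv_right_le_twoSidedOrbit (tildeSet K A) u)
  constructor
  · refine Subspace.mem_of_forall_dualCoannihilator fun a ha ↦ ?_
    exact hdense.eq_zero_of_forall_conv_left fun v hv ↦ ha _ (Submodule.subset_span ⟨v, hv, rfl⟩)
  · refine Subspace.mem_of_forall_dualCoannihilator fun a ha ↦ ?_
    exact hdense.eq_zero_of_forall_conv_right fun v hv ↦ ha _ (Submodule.subset_span ⟨v, hv, rfl⟩)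

end
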